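/- arXiv:math/0603554 — 2 statements merged into one kernel-verified Lean document; each statement's English description precedes it below -/
import Mathlib

section
/- If n is a positive integer not divisible by 9, then the number of positive divisors of n satisfies d(n) ≤ (16/105^{1/3}) · n^{1/3}; in particular d(n) < 3.392 · n^{1/3}. -/
lemma lemA : ∀ k : ℕ, (k+1)^3 ≤ 8 * 2^k := by
  intro k
  induction k with
  | zero => norm_num
  | succ m ih =>
    match m, ih with
    | 0, _ => norm_num
    | 1, _ => norm_num
    | 2, _ => norm_num
    | (j+3), ih =>
      have h : (j+3+1+1)^3 ≤ 2 * (j+3+1)^3 := by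
        nlinarith [Nat.zero_le j, Nat.zero_le (j^2), Nat.zero_le (j^3)]
      calc (j+3+1+1)^3 ≤ 2 * (j+3+1)^3 := h
        _ ≤ 2 * (8 * 2^(j+3)) := by omega
        _ = 8 * 2^(j+3+1) := by ring

lemma lemB (p : ℕ) (hp : 5 ≤ p) : ∀ k : ℕ, 1 ≤ k → p * (k+1)^3 ≤ 8 * p^k := by
  intro k
  induction k with
  | zero => omega
  | succ m ih =>
    intro _
    rcases Nat.eq_zero_or_pos m with h0 | h1
    · subst h0; simpa [Nat.mul_comm] using le_refl (8*p)
    · have ihm := ih h1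
      have hratio : (m+1+1)^3 ≤ 5 * (m+1)^3 := by
        nlinarith [h1, Nat.one_le_pow 3 m h1, Nat.one_le_pow 2 m h1]
      calc p * (m+1+1)^3 ≤ p * (5 * (m+1)^3) := Nat.mul_le_mul_left p hratio
        _ ≤ p * (p * (m+1)^3) := Nat.mul_le_mul_left p (Nat.mul_le_mul_right _ hp)
        _ = (p * (m+1)^3) * p := by ring
        _ ≤ (8 * p^m) * p := Nat.mul_le_mul_right p ihm
        _ = 8 * p^(m+1) := by ring


noncomputable def cwt (p : ℕ) : ℚ := if p = 2 then 8 else if p = 3 then 8/3 else 8/p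

lemma cwt_pos {p : ℕ} (hp : p.Prime) : 0 < cwt p := by
  have hppos : (0:ℚ) < p := by exact_mod_cast hp.pos
  unfold cwt
  split_ifs <;> positivity

lemma prime_not_small {p : ℕ} (hp : p.Prime) (h2 : p ≠ 2) (h3 : p ≠ 3) (h5 : p ≠ 5)
    (h7 : p ≠ 7) : 8 ≤ p := by
  by_contra h
  push_neg at h
  interval_cases p
  all_goals first | omega | exact absurd hp (by decide)

lemma cwt_le_one {p : ℕ} (hp : p.Prime) (h2 : p ≠ 2) (h3 : p ≠ 3) (h5 : p ≠ 5) (h7 : p ≠ 7) :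
    cwt p ≤ 1 := by
  have hp8 := prime_not_small hp h2 h3 h5 h7
  unfold cwt
  rw [if_neg h2, if_neg h3]
  rw [div_le_one (by positivity)]
  exact_mod_cast hp8

lemma pointwise (p k : ℕ) (hp : p.Prime) (hk : 1 ≤ k) (h3 : p = 3 → k = 1) :
    ((k:ℚ)+1)^3 ≤ cwt p * (p:ℚ)^k := by
  rcases eq_or_ne p 2 with rfl | h2
  · unfold cwt
    rw [if_pos rfl]
    exact_mod_cast lemA k
  rcases eq_or_ne p 3 with rfl | h3'
  · have hk1 := h3 rfl
    subst hk1
    norm_num [cwt]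
  · have hp5 : 5 ≤ p := by
      by_contra hlt
      push_neg at hlt
      interval_cases p
      all_goals first | omega | exact absurd hp (by decide)
    have hB := lemB p hp5 k hk
    unfold cwt
    rw [if_neg h2, if_neg h3']
    have hppos : (0:ℚ) < p := by exact_mod_cast hp.pos
    rw [div_mul_eq_mul_div, le_div_iff₀ hppos]
    calc ((k:ℚ)+1)^3 * p = ((p * (k+1)^3 : ℕ) : ℚ) := by push_cast; ring
      _ ≤ ((8 * p^k : ℕ) : ℚ) := by exact_mod_cast hB
      _ = 8 * (p:ℚ)^k := by push_cast; ring

lemma key (n : ℕ) (hn : 0 < n) (h9 : ¬ (9 ∣ n)) :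
    105 * (n.divisors.card : ℚ)^3 ≤ 4096 * n := by
  have hn0 : n ≠ 0 := hn.ne'
  set S := n.primeFactors with hS
  have hd : (n.divisors.card : ℚ) = ∏ p ∈ S, ((n.factorization p : ℚ) + 1) := by
    rw [Nat.card_divisors hn0]
    push_cast
    rfl
  have hnprod : (n : ℚ) = ∏ p ∈ S, (p:ℚ) ^ (n.factorization p) := by
    conv_lhs => rw [← Nat.factorization_prod_pow_eq_self hn0]
    rw [Nat.prod_factorization_eq_prod_primeFactors]
    push_cast
    rfl
  -- termwise bound
  have hterm : ∀ p ∈ S, ((n.factorization p : ℚ) + 1)^3 ≤ cwt p * (p:ℚ)^(n.factorization p) := by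
    intro p hp
    have hpp : p.Prime := Nat.prime_of_mem_primeFactors hp
    have hk : 1 ≤ n.factorization p := (Nat.Prime.factorization_pos_of_dvd hpp hn0
      (Nat.dvd_of_mem_primeFactors hp))
    refine pointwise p _ hpp hk ?_
    rintro rfl
    have h2 : ¬ 2 ≤ n.factorization 3 := by
      intro h2
      exact h9 (by
        have : 3^2 ∣ n := (Nat.Prime.pow_dvd_iff_le_factorization (by norm_num) hn0).mpr h2
        simpa using this)
    omega
  have hprodle : ∏ p ∈ S, ((n.factorization p : ℚ) + 1)^3 ≤
      ∏ p ∈ S, (cwt p * (p:ℚ)^(n.factorization p)) := by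
    refine Finset.prod_le_prod (fun p hp => by positivity) hterm
  -- bound the cwt product
  have hCpos : ∀ p ∈ S, 0 < cwt p := fun p hp => cwt_pos (Nat.prime_of_mem_primeFactors hp)
  have hT : (∏ p ∈ S, cwt p) ≤ 4096/105 := by
    classical
    set T : Finset ℕ := {2,3,5,7} with hTdef
    have hsplit : ∏ p ∈ S, cwt p = (∏ p ∈ S ∩ T, cwt p) * ∏ p ∈ S \ T, cwt p :=
      (Finset.prod_inter_mul_prod_diff S T cwt).symm
    have hsd : ∏ p ∈ S \ T, cwt p ≤ 1 := by
      refine Finset.prod_le_one (fun p hp => (hCpos p (Finset.mem_sdiff.mp hp).1).le) ?_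
      intro p hp
      rcases Finset.mem_sdiff.mp hp with ⟨hpS, hpT⟩
      have hpp := Nat.prime_of_mem_primeFactors hpS
      simp only [hTdef, Finset.mem_insert, Finset.mem_singleton] at hpT
      push_neg at hpT
      exact cwt_le_one hpp hpT.1 hpT.2.1 hpT.2.2.1 hpT.2.2.2
    have h2 : 0 ≤ ∏ p ∈ S ∩ T, cwt p :=
      Finset.prod_nonneg (fun p hp => (hCpos p (Finset.mem_inter.mp hp).1).le)
    have hint : ∏ p ∈ S ∩ T, cwt p ≤ ∏ p ∈ T, cwt p := by
      have hsub : S ∩ T ⊆ T := Finset.inter_subset_right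
      have hone : (1:ℚ) ≤ ∏ p ∈ T \ (S ∩ T), cwt p := by
        have hh := Finset.prod_le_prod (s := T \ (S ∩ T)) (f := fun _ => (1:ℚ)) (g := cwt)
          (fun i _ => by norm_num) (fun i hi => by
            have hiT : i ∈ T := (Finset.mem_sdiff.mp hi).1
            simp only [hTdef, Finset.mem_insert, Finset.mem_singleton] at hiT
            rcases hiT with rfl | rfl | rfl | rfl <;> norm_num [cwt])
        simpa using hh
      calc ∏ p ∈ S ∩ T, cwt p = 1 * ∏ p ∈ S ∩ T, cwt p := (one_mul _).symm
        _ ≤ (∏ p ∈ T \ (S ∩ T), cwt p) * ∏ p ∈ S ∩ T, cwt p :=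
            mul_le_mul_of_nonneg_right hone h2
        _ = ∏ p ∈ T, cwt p := Finset.prod_sdiff hsub
    have hTval : ∏ p ∈ T, cwt p = 4096/105 := by
      rw [hTdef]
      norm_num [cwt]
    have h1 : ∏ p ∈ S ∩ T, cwt p ≤ 4096/105 := hTval ▸ hint
    calc ∏ p ∈ S, cwt p = (∏ p ∈ S ∩ T, cwt p) * ∏ p ∈ S \ T, cwt p := hsplit
      _ ≤ (∏ p ∈ S ∩ T, cwt p) * 1 := by
          refine mul_le_mul_of_nonneg_left hsd h2
      _ = ∏ p ∈ S ∩ T, cwt p := mul_one _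
      _ ≤ 4096/105 := h1
  -- combine
  have hnpos : (0:ℚ) < n := by exact_mod_cast hn
  calc 105 * (n.divisors.card : ℚ)^3
      = 105 * ∏ p ∈ S, ((n.factorization p : ℚ) + 1)^3 := by
        rw [hd, ← Finset.prod_pow]
    _ ≤ 105 * ∏ p ∈ S, (cwt p * (p:ℚ)^(n.factorization p)) := by
        refine mul_le_mul_of_nonneg_left hprodle (by norm_num)
    _ = 105 * ((∏ p ∈ S, cwt p) * ∏ p ∈ S, (p:ℚ)^(n.factorization p)) := by
        rw [Finset.prod_mul_distrib]
    _ = 105 * ((∏ p ∈ S, cwt p) * n) := by rw [← hnprod]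
    _ ≤ 105 * ((4096/105) * n) := by
        refine mul_le_mul_of_nonneg_left (mul_le_mul_of_nonneg_right hT hnpos.le) (by norm_num)
    _ = 4096 * n := by ring

/-- If `n` is a positive integer not divisible by `9` then
`d(n) ≤ (16/105^(1/3)) n^(1/3)`; in particular `d(n) < 3.392 n^(1/3)`. -/
theorem stmt10 (n : ℕ) (hn : 0 < n) (h9 : ¬ (9 ∣ n)) :
    (n.divisors.card : ℝ) ≤ 16 / (105 : ℝ) ^ ((1 : ℝ) / 3) * (n : ℝ) ^ ((1 : ℝ) / 3) ∧
    (n.divisors.card : ℝ) < 3.392 * (n : ℝ) ^ ((1 : ℝ) / 3) := by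
  have hkey : 105 * ((n.divisors.card : ℝ))^3 ≤ 4096 * n := by
    exact_mod_cast key n hn h9
  set d : ℝ := (n.divisors.card : ℝ) with hdd
  have hd0 : 0 ≤ d := Nat.cast_nonneg _
  have hn0 : (0:ℝ) < n := by exact_mod_cast hn
  have hcube : d^3 ≤ 4096/105 * n := by linarith
  -- take cube roots
  have h1 : d ≤ (4096/105 * n) ^ ((1:ℝ)/3) := by
    have := Real.rpow_le_rpow (by positivity) hcube (by norm_num : (0:ℝ) ≤ (1:ℝ)/3)
    calc d = (d^3) ^ ((1:ℝ)/3) := by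
          rw [← Real.rpow_natCast d 3, ← Real.rpow_mul hd0]
          norm_num
      _ ≤ (4096/105 * n) ^ ((1:ℝ)/3) := this
  have hsplit : ((4096:ℝ)/105 * n) ^ ((1:ℝ)/3)
      = 16 / (105:ℝ) ^ ((1:ℝ)/3) * (n:ℝ) ^ ((1:ℝ)/3) := by
    rw [Real.mul_rpow (by norm_num) hn0.le, Real.div_rpow (by norm_num) (by norm_num)]
    congr 1
    have : ((4096:ℝ)) = 16 ^ (3:ℕ) := by norm_num
    rw [this, ← Real.rpow_natCast 16 3, ← Real.rpow_mul (by norm_num)]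
    norm_num
  have hleft : d ≤ 16 / (105:ℝ) ^ ((1:ℝ)/3) * (n:ℝ) ^ ((1:ℝ)/3) := hsplit ▸ h1
  refine ⟨hleft, lt_of_le_of_lt hleft ?_⟩
  have hx : (0:ℝ) < (105:ℝ) ^ ((1:ℝ)/3) := Real.rpow_pos_of_pos (by norm_num) _
  have hx3 : ((105:ℝ) ^ ((1:ℝ)/3))^(3:ℕ) = 105 := by
    rw [← Real.rpow_natCast _ 3, ← Real.rpow_mul (by norm_num)]
    norm_num
  have hc : 16 / (105:ℝ) ^ ((1:ℝ)/3) < 3.392 := by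
    rw [div_lt_iff₀ hx]
    nlinarith [hx, hx3, sq_nonneg ((105:ℝ) ^ ((1:ℝ)/3) - 4.718)]
  have hnp : (0:ℝ) < (n:ℝ) ^ ((1:ℝ)/3) := Real.rpow_pos_of_pos hn0 _
  exact mul_lt_mul_of_pos_right hc hnp
end

section
/- Let n ≥ 3 and m be positive integers with m ≥ n − 1, and let P^{(1)}(n,m) denote the proportion of elements g ∈ S_n with g^m = 1 for which the three points 1, 2, 3 all lie in the same cycle of g. Then P^{(1)}(n,m) = ((n−3)!/n!) · ∑_{d | m, 3 ≤ d ≤ n} (d − 1)(d − 2) · P(n − d, m), where the sum is over positive divisors d of m with 3 ≤ d ≤ n. -/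
/-
Write `g = f * c`, where `c` is the cycle of `g` through the point `0` and `f` is the rest of `g`,
which fixes the support `S` of `c` pointwise. As `f` and `c` commute, `g ^ m = 1` iff `#S ∣ m` and
`f ^ m = 1`. So for each `S ⊇ {0, 1, 2}` with `#S = d ∣ m` there are `(d - 1)!` choices of `c` and
as many choices of `f` as there are elements of `S_{n-d}` of order dividing `m`; there are
`(n - 3).choose (d - 3)` such sets `S`, and `(n - 3).choose (d - 3) * (d - 1)! / n!` equals
`(n - 3)! / n! * (d - 1) * (d - 2) / (n - d)!`.
-/

/-- P(n,m): the proportion of elements of the symmetric group `S_n`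
with `g ^ m = 1` (for `n = 0` this equals `1`, matching the convention
`P(r,m) = 1` for `r ≤ 0`). -/
noncomputable def P (n m : ℕ) : ℝ :=
  (Nat.card {g : Equiv.Perm (Fin n) // g ^ m = 1} : ℝ) / (Nat.factorial n)

open Equiv Finset
open scoped Nat

theorem Finset.sum_superset_apply_card {α M : Type*} [Fintype α] [DecidableEq α]
    [AddCommMonoid M] (A : Finset α) (f : ℕ → M) :
    ∑ S with A ⊆ S, f #S =
      ∑ d ∈ Icc #A (Fintype.card α), (Fintype.card α - #A).choose (d - #A) • f d := by
  have hA := card_le_univ A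
  calc ∑ S with A ⊆ S, f #S = ∑ B ∈ Aᶜ.powerset, f (#B + #A) := by
        refine sum_nbij' (· \ A) (· ∪ A) (fun S hS => ?_) (fun B hB => ?_) (fun S hS => ?_)
          (fun B hB => ?_) (fun S hS => ?_)
        · simp [sdiff_eq_inter_compl]
        · simp
        · exact sdiff_union_of_subset (mem_filter.mp hS).2
        · exact union_sdiff_cancel_right (disjoint_compl_left.mono_left (mem_powerset.mp hB))
        · rw [card_sdiff_add_card_eq_card (mem_filter.mp hS).2]
    _ = ∑ j ∈ range (Fintype.card α - #A + 1),
          (Fintype.card α - #A).choose j • f (j + #A) := by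
        rw [sum_powerset_apply_card (fun j => f (j + #A)), card_compl]
    _ = _ := by
        refine sum_nbij' (· + #A) (· - #A) (fun j hj => ?_) (fun d hd => ?_) (fun j _ => ?_)
          (fun d hd => ?_) (fun j _ => ?_)
        · simp only [mem_range, mem_Icc] at hj ⊢; omega
        · simp only [mem_range, mem_Icc] at hd ⊢; omega
        · exact Nat.add_sub_cancel j #A
        · exact Nat.sub_add_cancel (mem_Icc.mp hd).1
        · rw [Nat.add_sub_cancel]

namespace Equiv.Perm

theorem card_pow_eq_one_congr {β γ : Type*} (e : β ≃ γ) (m : ℕ) :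
    Nat.card {f : Perm β // f ^ m = 1} = Nat.card {f : Perm γ // f ^ m = 1} :=
  Nat.card_congr <| e.permCongrHom.toEquiv.subtypeEquiv fun f => by
    rw [MulEquiv.toEquiv_eq_coe, MulEquiv.coe_toEquiv, ← map_pow,
      map_eq_one_iff _ e.permCongrHom.injective]

theorem card_pow_eq_one_and_fixes_eq_card_compl {α : Type*} [DecidableEq α] (S : Finset α)
    (m : ℕ) :
    Nat.card {f : Perm α // f ^ m = 1 ∧ ∀ a ∈ S, f a = a} =
      Nat.card {f : Perm {a // a ∉ S} // f ^ m = 1} := by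
  refine Nat.card_congr
    (((subtypeSubtypeEquivSubtypeInter _ (fun f : Perm α => f ^ m = 1)).trans
      (subtypeEquivRight fun f => ?_)).symm.trans
    ((Perm.subtypeEquivSubtypePerm (· ∉ S)).symm.subtypeEquiv fun f => ?_))
  · simp only [not_not, and_comm]
  · rw [← ofSubtype_injective.eq_iff, map_pow, map_one, ← Perm.subtypeEquivSubtypePerm_apply_coe,
      apply_symm_apply]

section

variable {α : Type*} [Fintype α] [DecidableEq α]

-- A cycle with support `S` is a permutation of `S` of cycle type `{#S}`.
theorem card_isCycle_support_eq {S : Finset α} (hS : 2 ≤ #S) :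
    Nat.card {c : Perm α // c.IsCycle ∧ c.support = S} = (#S - 1)! := by
  have key : ∀ f : Perm {a // a ∈ S},
      (ofSubtype f).IsCycle ∧ (ofSubtype f).support = S ↔ f.cycleType = {#S} := by
    intro f
    rw [← cycleType_ofSubtype]
    refine ⟨fun ⟨hc, hs⟩ => by rw [hc.cycleType, hs], fun h => ?_⟩
    have hc : (ofSubtype f).IsCycle := card_cycleType_eq_one.mp (by simp [h])
    have hcard : #(ofSubtype f).support = #S := by
      simpa [hc.cycleType] using h
    refine ⟨hc, eq_of_subset_of_card_le (fun a ha => ?_) hcard.ge⟩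
    by_contra haS
    exact mem_support.mp ha (ofSubtype_apply_of_not_mem f haS)
  calc Nat.card {c : Perm α // c.IsCycle ∧ c.support = S}
      = Nat.card {f : Perm {a // a ∈ S} // f.cycleType = {#S}} := by
        refine Nat.card_congr ((subtypeSubtypeEquivSubtype fun h a ha =>
          notMem_support.mp (h.2 ▸ ha)).symm.trans
          ((Perm.subtypeEquivSubtypePerm (· ∈ S)).symm.subtypeEquiv fun c => ?_))
        rw [← key, ← Perm.subtypeEquivSubtypePerm_apply_coe, apply_symm_apply]
    _ = #({f | f.cycleType = {#S}} : Finset (Perm {a // a ∈ S})) := by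
        rw [Nat.card_eq_fintype_card, Fintype.card_subtype]
    _ = (#S - 1)! := by
        rw [card_of_cycleType_singleton hS (by simp)]
        simp

theorem disjoint_of_forall_mem_support_apply_eq {f c : Perm α}
    (h : ∀ a ∈ c.support, f a = a) : Disjoint f c := fun a =>
  (em (a ∈ c.support)).imp (h a) notMem_support.mp

theorem card_pow_eq_one_cycleOf_support_eq_of_dvd {m : ℕ} {S : Finset α} {x : α} (hx : x ∈ S)
    (hS : 2 ≤ #S) (hSm : #S ∣ m) :
    Nat.card {g : Perm α // g ^ m = 1 ∧ (g.cycleOf x).support = S} =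
      (#S - 1)! * Nat.card {f : Perm α // f ^ m = 1 ∧ ∀ a ∈ S, f a = a} := by
  have hcm : ∀ c : Perm α, c.IsCycle → c.support = S → c ^ m = 1 := fun c hc hcS =>
    orderOf_dvd_iff_pow_eq_one.mp (hc.orderOf ▸ hcS ▸ hSm)
  have hdisj : ∀ {c f : Perm α}, c.support = S → (∀ a ∈ S, f a = a) → Disjoint f c :=
    fun hcS hf => disjoint_of_forall_mem_support_apply_eq (hcS ▸ hf)
  have hcycleOf : ∀ (c f : Perm α), c.IsCycle → c.support = S → (∀ a ∈ S, f a = a) →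
      (f * c).cycleOf x = c := fun c f hc hcS hf => by
    have hcomm := (hdisj hcS hf).commute
    rw [hcomm.eq, cycleOf_mul_of_apply_right_eq_self hcomm.symm x (hf x hx),
      hc.cycleOf_eq (mem_support.mp (hcS ▸ hx))]
  rw [← card_isCycle_support_eq hS, ← Nat.card_prod]
  let mul : {c : Perm α // c.IsCycle ∧ c.support = S} ×
      {f : Perm α // f ^ m = 1 ∧ ∀ a ∈ S, f a = a} →
      {g : Perm α // g ^ m = 1 ∧ (g.cycleOf x).support = S} := fun ⟨c, f⟩ =>
    ⟨f * c, by rw [(hdisj c.2.2 f.2.2).commute.mul_pow, f.2.1, hcm c c.2.1 c.2.2, one_mul],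
      by rw [hcycleOf c f c.2.1 c.2.2 f.2.2, c.2.2]⟩
  refine (Nat.card_eq_of_bijective mul ⟨fun ⟨c, f⟩ ⟨c', f'⟩ hmul => ?_, ?_⟩).symm
  · have hfc : f.1 * c = f'.1 * c' := congrArg Subtype.val hmul
    have hcc : c = c' := Subtype.ext <| by
      rw [← hcycleOf c f c.2.1 c.2.2 f.2.2, ← hcycleOf c' f' c'.2.1 c'.2.2 f'.2.2, hfc]
    subst hcc
    rw [mul_left_inj] at hfc
    rw [Subtype.ext hfc]
  · rintro ⟨g, hg, hgS⟩
    set c := g.cycleOf x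
    have hxg : x ∈ g.support := (mem_support_cycleOf_iff.mp (hgS ▸ hx)).2
    have hdisj : Disjoint (g * c⁻¹) c :=
      disjoint_mul_inv_of_mem_cycleFactorsFinset (cycleOf_mem_cycleFactorsFinset_iff.mpr hxg)
    have hc : c.IsCycle := isCycle_cycleOf g (mem_support.mp hxg)
    have hfix : ∀ a ∈ S, (g * c⁻¹) a = a := fun a ha =>
      (hdisj a).resolve_right (mem_support.mp (hgS ▸ ha))
    have hfm : (g * c⁻¹) ^ m = 1 := by
      calc (g * c⁻¹) ^ m = (g * c⁻¹) ^ m * c ^ m := by rw [hcm c hc hgS, mul_one]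
        _ = 1 := by rw [← hdisj.commute.mul_pow, inv_mul_cancel_right, hg]
    exact ⟨⟨⟨c, hc, hgS⟩, ⟨g * c⁻¹, hfm, hfix⟩⟩, Subtype.ext (inv_mul_cancel_right g c)⟩

theorem card_support_cycleOf_dvd {g : Perm α} {x : α} (hx : g x ≠ x) {m : ℕ} (hg : g ^ m = 1) :
    #(g.cycleOf x).support ∣ m :=
  (isCycle_cycleOf g hx).orderOf ▸
    (orderOf_cycleOf_dvd_orderOf g x).trans (orderOf_dvd_of_pow_eq_one hg)

theorem card_pow_eq_one_cycleOf_support_eq {m : ℕ} {S : Finset α} {x : α} (hx : x ∈ S)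
    (hS : 2 ≤ #S) :
    Nat.card {g : Perm α // g ^ m = 1 ∧ (g.cycleOf x).support = S} =
      if #S ∣ m then
        (#S - 1)! * Nat.card {f : Perm (Fin (Fintype.card α - #S)) // f ^ m = 1}
      else 0 := by
  split_ifs with hSm
  · rw [card_pow_eq_one_cycleOf_support_eq_of_dvd hx hS hSm,
      card_pow_eq_one_and_fixes_eq_card_compl, card_pow_eq_one_congr (Fintype.equivFinOfCardEq
        (by rw [Fintype.card_subtype_compl, Fintype.card_coe]))]
  · refine Nat.card_eq_zero.mpr (Or.inl ⟨fun ⟨g, hg, hgS⟩ => hSm ?_⟩)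
    have hxg : g x ≠ x := mem_support.mp (mem_support_cycleOf_iff.mp (hgS ▸ hx)).2
    exact hgS ▸ card_support_cycleOf_dvd hxg hg

theorem forall_sameCycle_iff_subset_support_cycleOf {g : Perm α} {A : Finset α} {x : α}
    (hA : 2 ≤ #A) :
    (∀ y ∈ A, g.SameCycle x y) ↔ A ⊆ (g.cycleOf x).support := by
  refine ⟨fun h y hy => mem_support_cycleOf_iff.mpr ⟨h y hy, ?_⟩,
    fun h y hy => (mem_support_cycleOf_iff.mp (h hy)).1⟩
  obtain ⟨z, hz, hzx⟩ := exists_mem_ne hA x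
  exact mem_support.mpr fun hfix => hzx ((h z hz).eq_of_left hfix).symm

theorem card_pow_eq_one_forall_sameCycle {m : ℕ} (hm : m ≠ 0) {A : Finset α} (hA : 2 ≤ #A)
    {x : α} (hx : x ∈ A) :
    Nat.card {g : Perm α // g ^ m = 1 ∧ ∀ y ∈ A, g.SameCycle x y} =
      ∑ d ∈ m.divisors with #A ≤ d ∧ d ≤ Fintype.card α,
        (Fintype.card α - #A).choose (d - #A) *
          ((d - 1)! * Nat.card {f : Perm (Fin (Fintype.card α - d)) // f ^ m = 1}) := by
  have hAS : ∀ S ∈ ({S | A ⊆ S} : Finset (Finset α)), A ⊆ S := fun _ hS => (mem_filter.mp hS).2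
  calc Nat.card {g : Perm α // g ^ m = 1 ∧ ∀ y ∈ A, g.SameCycle x y}
      = #{g : Perm α | g ^ m = 1 ∧ A ⊆ (g.cycleOf x).support} := by
        simp_rw [forall_sameCycle_iff_subset_support_cycleOf hA]
        rw [Nat.card_eq_fintype_card, Fintype.card_subtype]
    _ = ∑ S with A ⊆ S, Nat.card {g : Perm α // g ^ m = 1 ∧ (g.cycleOf x).support = S} := by
        rw [card_eq_sum_card_fiberwise fun g hg =>
          mem_filter.mpr ⟨mem_univ _, (mem_filter.mp hg).2.2⟩]
        refine sum_congr rfl fun S hS => ?_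
        rw [Nat.card_eq_fintype_card, Fintype.card_subtype, filter_filter]
        exact congrArg card (filter_congr fun g _ =>
          ⟨fun ⟨⟨hg, _⟩, hgS⟩ => ⟨hg, hgS⟩, fun ⟨hg, hgS⟩ => ⟨⟨hg, hgS ▸ hAS S hS⟩, hgS⟩⟩)
    _ = ∑ S with A ⊆ S, if #S ∣ m then
          (#S - 1)! * Nat.card {f : Perm (Fin (Fintype.card α - #S)) // f ^ m = 1} else 0 :=
        sum_congr rfl fun S hS =>
          card_pow_eq_one_cycleOf_support_eq (hAS S hS hx)
            (hA.trans (card_le_card (hAS S hS)))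
    _ = ∑ d ∈ Icc #A (Fintype.card α), (Fintype.card α - #A).choose (d - #A) • if d ∣ m then
          (d - 1)! * Nat.card {f : Perm (Fin (Fintype.card α - d)) // f ^ m = 1} else 0 :=
        sum_superset_apply_card A fun d => if d ∣ m then
          (d - 1)! * Nat.card {f : Perm (Fin (Fintype.card α - d)) // f ^ m = 1} else 0
    _ = _ := by
        simp only [smul_eq_mul, mul_ite, mul_zero]
        rw [← sum_filter]
        refine sum_congr (Finset.ext fun d => ?_) fun _ _ => rfl
        simp only [mem_filter, mem_Icc, Nat.mem_divisors]
        tauto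

end

end Equiv.Perm

theorem Nat.cast_choose_sub_three_mul_factorial {n d : ℕ} (h3 : 3 ≤ d) (hd : d ≤ n) :
    ((n - 3).choose (d - 3) * (d - 1)! : ℝ) = (n - 3)! / (n - d)! * ((d - 1) * (d - 2)) := by
  obtain ⟨e, rfl⟩ : ∃ e, d = e + 3 := ⟨d - 3, by omega⟩
  rw [show e + 3 - 3 = e from rfl, show e + 3 - 1 = e + 1 + 1 from rfl,
    Nat.cast_choose ℝ (show e ≤ n - 3 by omega), show n - 3 - e = n - (e + 3) by omega,
    Nat.factorial_succ, Nat.factorial_succ]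
  push_cast
  field_simp
  ring

/-- For `n ≥ 3` and `m ≥ n - 1`, the proportion `P⁽¹⁾(n,m)` of `g ∈ S_n` of
order dividing `m` for which the points `1, 2, 3` (here the first three points
of `Fin n`) lie in the same `g`-cycle equals
`((n-3)!/n!) ∑_{d ∣ m, 3 ≤ d ≤ n} (d-1)(d-2) P(n-d, m)`. -/
theorem stmt15 (n m : ℕ) (hn : 3 ≤ n) (hm : 0 < m) :
    (Nat.card {g : Equiv.Perm (Fin n) // g ^ m = 1 ∧
        g.SameCycle ⟨0, by omega⟩ ⟨1, by omega⟩ ∧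
        g.SameCycle ⟨0, by omega⟩ ⟨2, by omega⟩} : ℝ) / (Nat.factorial n)
      = (Nat.factorial (n - 3) : ℝ) / (Nat.factorial n) *
        ∑ d ∈ m.divisors.filter (fun d => 3 ≤ d ∧ d ≤ n),
          ((d : ℝ) - 1) * ((d : ℝ) - 2) * P (n - d) m := by
  set A : Finset (Fin n) := {⟨0, by omega⟩, ⟨1, by omega⟩, ⟨2, by omega⟩}
  have hA : #A = 3 := card_eq_three.mpr ⟨_, _, _, by simp, by simp, by simp, rfl⟩
  have hcount :=
    Perm.card_pow_eq_one_forall_sameCycle (A := A) hm.ne' (by omega) (mem_insert_self _ _)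
  simp only [A, mem_insert, mem_singleton, forall_eq_or_imp, forall_eq, Perm.SameCycle.refl,
    true_and] at hcount
  rw [hcount, hA, Fintype.card_fin, Nat.cast_sum, sum_div, mul_sum]
  refine sum_congr rfl fun d hd => ?_
  obtain ⟨h3, hdn⟩ := (mem_filter.mp hd).2
  rw [P, Nat.cast_mul, Nat.cast_mul, ← mul_assoc, Nat.cast_choose_sub_three_mul_factorial h3 hdn]
  ring
end
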